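/- arXiv:1307.2527 — 2 statements merged into one kernel-verified Lean document; each statement's English description precedes it below -/
import Mathlib

section
/- Let G be a finite group and let H be a subgroup of G. Consider the square matrix over ℚ whose rows and columns are indexed by the G-conjugacy classes of subgroups of H, and whose (P,Q)-entry is the number |P\G/Q| of (P,Q)-double cosets in G. Then the rank of this matrix equals the number of G-conjugacy classes of cyclic subgroups of H. -/
/-- The set of double cosets `P\G/Q`, i.e. the set of orbits of the action of
`P × Q` on `G` given by `(p, q) · g = p * g * q⁻¹`. -/
def DoubleCosets {G : Type*} [Group G] (P Q : Subgroup G) : Type _ :=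
  Quot (fun x y : G => ∃ p ∈ P, ∃ q ∈ Q, p * x * q⁻¹ = y)

/-!
Burnside's lemma for the action `(p, q) • g = p * g * q⁻¹` of `P × Q` on `G` gives
`|P\G/Q| |P| |Q| = ∑_c |P ∩ c| |Q ∩ c| |C_G(c)|`, summed over the conjugacy classes `c` of `G`.
So, rescaled by `|P|` and `|Q|`, the matrix is `Vᵀ D V` with `V = (|P ∩ c|)_{c,P}` and `D`
positive diagonal, and its rank is the dimension of the span of the class-count vectors
`(|P ∩ c|)_c` of the subgroups `P ≤ H` (these only depend on the `G`-class of `P`).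
Sorting the elements of `P` by the cyclic subgroup they generate, `|P ∩ c| = ∑_{C ≤ P} γ_C(c)`
where `γ_C(c)` counts the generators of `C` lying in `c`. This relation is unitriangular, so the
vectors `γ_C`, `C ≤ H`, have the same span. They vanish for non-cyclic `C`, depend only on the
`G`-class of `C`, and are linearly independent on the classes of cyclic subgroups: the class of a
generator of `C` is a coordinate on which `γ_{C'}` is nonzero only for `C'` conjugate to `C`.
-/

open Finset Module Submodule

open scoped Classical

namespace Matrix

variable {m n R : Type*} [Fintype m] [Fintype n] [DecidableEq m]
  [Field R] [LinearOrder R] [IsStrictOrderedRing R]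

theorem ker_mulVecLin_transpose_mul_diagonal_mul_self (A : Matrix m n R) {d : m → R}
    (hd : ∀ i, 0 < d i) :
    LinearMap.ker (Aᵀ * diagonal d * A).mulVecLin = LinearMap.ker A.mulVecLin := by
  ext x
  simp only [LinearMap.mem_ker, mulVecLin_apply, ← mulVec_mulVec]
  refine ⟨fun h => ?_, fun h => by simp [h]⟩
  have hsum := congr_arg (dotProduct x) h
  rw [dotProduct_mulVec, vecMul_transpose, dotProduct_zero, dotProduct] at hsum
  simp only [mulVec_diagonal] at hsum
  have hterm := (Finset.sum_eq_zero_iff_of_nonneg fun i _ =>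
    (by nlinarith [hd i, mul_self_nonneg ((A *ᵥ x) i)] :
      0 ≤ (A *ᵥ x) i * (d i * (A *ᵥ x) i))).1 hsum
  funext i
  simpa [(hd i).ne', mul_left_comm] using hterm i (Finset.mem_univ i)

theorem rank_transpose_mul_diagonal_mul_self (A : Matrix m n R) {d : m → R}
    (hd : ∀ i, 0 < d i) : (Aᵀ * diagonal d * A).rank = A.rank := by
  have hB := LinearMap.finrank_range_add_finrank_ker (Aᵀ * diagonal d * A).mulVecLin
  have hA := LinearMap.finrank_range_add_finrank_ker A.mulVecLin
  rw [ker_mulVecLin_transpose_mul_diagonal_mul_self A hd] at hB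
  simp only [rank]
  omega

end Matrix

theorem linearIndependent_of_forall_exists_apply_ne_zero {ι κ R : Type*} [Ring R]
    [NoZeroDivisors R] (v : ι → κ → R) (h : ∀ i, ∃ k, v i k ≠ 0 ∧ ∀ j ≠ i, v j k = 0) :
    LinearIndependent R v := by
  rw [linearIndependent_iff']
  intro s g hg i hi
  obtain ⟨k, hik, hjk⟩ := h i
  have hk := congr_fun hg k
  simp only [Finset.sum_apply, Pi.smul_apply, smul_eq_mul, Pi.zero_apply] at hk
  rw [Finset.sum_eq_single i (fun j _ hji => by rw [hjk j hji, mul_zero])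
    (fun h => absurd hi h)] at hk
  exact (mul_eq_zero.1 hk).resolve_right hik

theorem Submodule.span_image_sum_le_eq_span_image {α K V : Type*} [PartialOrder α] [Fintype α]
    [DecidableLE α] [Field K] [AddCommGroup V] [Module K V] (w : α → V) {s : Set α}
    (hs : IsLowerSet s) :
    span K ((fun a => ∑ b ∈ univ.filter (· ≤ a), w b) '' s) = span K (w '' s) := by
  apply le_antisymm <;> rw [span_le]
  · rintro _ ⟨a, ha, rfl⟩
    exact sum_mem fun b hb => subset_span ⟨b, hs (mem_filter.1 hb).2 ha, rfl⟩
  · rintro _ ⟨a, ha, rfl⟩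
    induction a using WellFoundedLT.induction with
    | _ a ih =>
    have hw : w a = ∑ b ∈ univ.filter (· ≤ a), w b
        - ∑ b ∈ (univ.filter (· ≤ a)).erase a, w b := by
      rw [← add_sum_erase _ _ (by simp : a ∈ univ.filter (· ≤ a)), add_sub_cancel_right]
    rw [SetLike.mem_coe, hw]
    refine sub_mem (subset_span ⟨a, ha, rfl⟩) (sum_mem fun b hb => ?_)
    obtain ⟨hba, hb⟩ := mem_erase.1 hb
    have hble : b ≤ a := (mem_filter.1 hb).2
    exact ih b (lt_of_le_of_ne hble hba) (hs hble ha)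

section ConjugacyCounts

variable {G : Type*} [Group G]

noncomputable def conjugatorCount (q p : G) : ℕ := Nat.card {g : G // g * q * g⁻¹ = p}

theorem conjugatorCount_conj (a b q p : G) :
    conjugatorCount (a * q * a⁻¹) (b * p * b⁻¹) = conjugatorCount q p := by
  refine Nat.card_congr ((Equiv.subtypeEquiv ((Equiv.mulLeft b).trans (Equiv.mulRight a⁻¹))
    fun g => ?_).symm)
  have h : b * g * a⁻¹ * (a * q * a⁻¹) * (b * g * a⁻¹)⁻¹ = b * (g * q * g⁻¹) * b⁻¹ := by group
  simp only [Equiv.trans_apply, Equiv.coe_mulLeft, Equiv.coe_mulRight, h]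
  exact (MulAut.conj b).injective.eq_iff.symm

theorem conjugatorCount_eq_zero {q p : G} (h : ¬IsConj q p) : conjugatorCount q p = 0 :=
  have : IsEmpty {g : G // g * q * g⁻¹ = p} := ⟨fun g => h (isConj_iff.2 ⟨g, g.2⟩)⟩
  Nat.card_of_isEmpty

theorem conjugatorCount_self_pos [Finite G] (p : G) : 0 < conjugatorCount p p :=
  have : Nonempty {g : G // g * p * g⁻¹ = p} := ⟨⟨1, by group⟩⟩
  Nat.card_pos

noncomputable def ConjClasses.centralizerCard (c : ConjClasses G) : ℕ :=
  Quotient.lift (fun p => conjugatorCount p p) (fun q p hqp => by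
    obtain ⟨a, rfl⟩ := isConj_iff.1 hqp
    exact (conjugatorCount_conj a a q q).symm) c

theorem ConjClasses.centralizerCard_pos [Finite G] (c : ConjClasses G) :
    0 < c.centralizerCard := by
  induction c using Quotient.inductionOn with
  | _ p => exact conjugatorCount_self_pos p

theorem conjugatorCount_eq_ite (q p : G) :
    conjugatorCount q p = if ConjClasses.mk q = ConjClasses.mk p
      then (ConjClasses.mk p).centralizerCard else 0 := by
  split_ifs with h
  · obtain ⟨a, ha⟩ := isConj_iff.1 (ConjClasses.mk_eq_mk_iff_isConj.1 h)
    rw [← conjugatorCount_conj a 1 q p, ha, one_mul, inv_one, mul_one]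
    rfl
  · exact conjugatorCount_eq_zero (mt ConjClasses.mk_eq_mk_iff_isConj.2 h)

theorem ConjClasses.mk_conj (g x : G) : ConjClasses.mk (g * x * g⁻¹) = ConjClasses.mk x :=
  ConjClasses.mk_eq_mk_iff_isConj.2 (isConj_iff.2 ⟨g⁻¹, by group⟩)

end ConjugacyCounts

namespace Subgroup

variable {G : Type*} [Group G] [Fintype G]

noncomputable def conjClassCount (P : Subgroup G) (c : ConjClasses G) : ℕ :=
  #{x | x ∈ P ∧ ConjClasses.mk x = c}

noncomputable def generatorConjClassCount (C : Subgroup G) (c : ConjClasses G) : ℕ :=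
  #{x | zpowers x = C ∧ ConjClasses.mk x = c}

theorem sum_conjClasses_eq_sum_conjClassCount_smul {M : Type*} [AddCommMonoid M]
    (P : Subgroup G) (h : ConjClasses G → M) :
    ∑ p : P, h (ConjClasses.mk (p : G)) = ∑ c, P.conjClassCount c • h c := by
  rw [← sum_subtype {x | x ∈ P} (by simp) (fun x => h (ConjClasses.mk x)),
    ← sum_fiberwise' _ ConjClasses.mk h]
  refine sum_congr rfl fun c _ => ?_
  rw [sum_const, filter_filter, conjClassCount]

theorem conjClassCount_map_conj (g : G) (P : Subgroup G) :
    (P.map (MulAut.conj g).toMonoidHom).conjClassCount = P.conjClassCount := by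
  funext c
  refine (card_equiv (MulAut.conj g).toEquiv fun x => ?_).symm
  simp [ConjClasses.mk_conj]

theorem generatorConjClassCount_map_conj (g : G) (C : Subgroup G) :
    (C.map (MulAut.conj g).toMonoidHom).generatorConjClassCount = C.generatorConjClassCount := by
  funext c
  refine (card_equiv (MulAut.conj g).toEquiv fun x => ?_).symm
  have hmap : zpowers (g * x * g⁻¹) = (zpowers x).map (MulAut.conj g).toMonoidHom :=
    (MonoidHom.map_zpowers (MulAut.conj g).toMonoidHom x).symm
  have hinj : Function.Injective (map (MulAut.conj g).toMonoidHom) :=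
    map_injective (f := (MulAut.conj g).toMonoidHom) (MulAut.conj g).injective
  simp only [mem_filter, mem_univ, true_and, MulEquiv.toEquiv_eq_coe, MulEquiv.coe_toEquiv,
    MulAut.conj_apply]
  rw [hmap, hinj.eq_iff, ConjClasses.mk_conj]

theorem conjClassCount_eq_sum_generatorConjClassCount (P : Subgroup G) (c : ConjClasses G) :
    P.conjClassCount c = ∑ C ∈ {C | C ≤ P}, C.generatorConjClassCount c := by
  rw [conjClassCount, card_eq_sum_card_fiberwise (f := zpowers) (t := {C | C ≤ P})
    fun x hx => by simpa using zpowers_le.2 (mem_filter.1 hx).2.1]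
  refine sum_congr rfl fun C hC => congr_arg card (Finset.ext fun x => ?_)
  simp only [mem_filter, mem_univ, true_and] at hC ⊢
  exact ⟨fun ⟨⟨_, hc⟩, hC⟩ => ⟨hC, hc⟩, fun ⟨hC', hc⟩ => ⟨⟨hC (hC' ▸ mem_zpowers x), hc⟩, hC'⟩⟩

theorem generatorConjClassCount_eq_zero {C : Subgroup G} (hC : ¬IsCyclic C) :
    C.generatorConjClassCount = 0 := by
  funext c
  refine card_eq_zero.2 (filter_eq_empty_iff.2 fun x _ ⟨hx, _⟩ => hC ?_)
  exact C.isCyclic_iff_exists_zpowers_eq_top.2 ⟨x, hx⟩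

theorem generatorConjClassCount_mk_ne_zero {C : Subgroup G} {x : G} (hx : zpowers x = C) :
    C.generatorConjClassCount (ConjClasses.mk x) ≠ 0 :=
  card_ne_zero.2 ⟨x, by simp [hx]⟩

theorem exists_map_conj_eq_of_generatorConjClassCount_ne_zero {C C' : Subgroup G}
    {c : ConjClasses G} (h : C.generatorConjClassCount c ≠ 0)
    (h' : C'.generatorConjClassCount c ≠ 0) :
    ∃ g : G, C.map (MulAut.conj g).toMonoidHom = C' := by
  obtain ⟨x, hx⟩ := card_ne_zero.1 h
  obtain ⟨y, hy⟩ := card_ne_zero.1 h'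
  simp only [mem_filter, mem_univ, true_and] at hx hy
  obtain ⟨g, rfl⟩ := isConj_iff.1 (ConjClasses.mk_eq_mk_iff_isConj.1 (hx.2.trans hy.2.symm))
  exact ⟨g, by rw [← hx.1, MonoidHom.map_zpowers, ← hy.1]; rfl⟩

end Subgroup

namespace DoubleCosets

open MulAction

variable {G : Type*} [Group G]

abbrev prodAction (P Q : Subgroup G) : MulAction (P × Q) G where
  smul a g := a.1 * g * (a.2 : G)⁻¹
  one_smul g := by simp [HSMul.hSMul]
  mul_smul a b g := by
    show ((a.1 * b.1 : P) : G) * g * ((a.2 * b.2 : Q) : G)⁻¹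
      = a.1 * (b.1 * g * (b.2 : G)⁻¹) * (a.2 : G)⁻¹
    simp only [Subgroup.coe_mul, mul_inv_rev, mul_assoc]

attribute [local instance] prodAction

theorem card_eq_card_orbits (P Q : Subgroup G) :
    Nat.card (DoubleCosets P Q) = Nat.card (orbitRel.Quotient (P × Q) G) := by
  refine Nat.card_congr (Quot.congrRight fun x y => ?_)
  rw [orbitRel_apply, mem_orbit_symm, mem_orbit_iff]
  constructor
  · rintro ⟨p, hp, q, hq, rfl⟩
    exact ⟨(⟨p, hp⟩, ⟨q, hq⟩), rfl⟩
  · rintro ⟨a, rfl⟩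
    exact ⟨a.1, a.1.2, a.2, a.2.2, rfl⟩

theorem mem_fixedBy_iff {P Q : Subgroup G} (a : P × Q) (g : G) :
    g ∈ fixedBy G a ↔ g * a.2 * g⁻¹ = a.1 := by
  rw [mem_fixedBy]
  show (a.1 : G) * g * (a.2 : G)⁻¹ = g ↔ _
  rw [mul_inv_eq_iff_eq_mul, mul_inv_eq_iff_eq_mul, eq_comm]

variable [Fintype G]

theorem card_mul_card_mul_card_eq_sum_conjugatorCount (P Q : Subgroup G) :
    Nat.card (DoubleCosets P Q) * (Nat.card P * Nat.card Q)
      = ∑ a : P × Q, conjugatorCount (a.2 : G) a.1 := by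
  rw [card_eq_card_orbits, ← Nat.card_prod, Nat.card_eq_fintype_card, Nat.card_eq_fintype_card,
    ← sum_card_fixedBy_eq_card_orbits_mul_card_group]
  refine sum_congr rfl fun a _ => ?_
  rw [← Nat.card_eq_fintype_card]
  exact Nat.card_congr (Equiv.subtypeEquivRight (mem_fixedBy_iff a))

theorem card_mul_card_mul_card_eq_sum_conjClassCount (P Q : Subgroup G) :
    Nat.card (DoubleCosets P Q) * (Nat.card P * Nat.card Q)
      = ∑ c, P.conjClassCount c * Q.conjClassCount c * c.centralizerCard := by
  rw [card_mul_card_mul_card_eq_sum_conjugatorCount, Fintype.sum_prod_type]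
  have hinner (p : G) : ∑ q : Q, conjugatorCount (q : G) p
      = Q.conjClassCount (ConjClasses.mk p) * (ConjClasses.mk p).centralizerCard := by
    simp_rw [conjugatorCount_eq_ite]
    convert Q.sum_conjClasses_eq_sum_conjClassCount_smul
      fun c => if c = ConjClasses.mk p then (ConjClasses.mk p).centralizerCard else 0
    simp
  simp_rw [hinner]
  rw [P.sum_conjClasses_eq_sum_conjClassCount_smul
    fun c => Q.conjClassCount c * c.centralizerCard]
  simp [mul_assoc]

end DoubleCosets

section Rank

open Matrix

variable {G : Type*} [Group G] [Fintype G] {ι : Type*}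

noncomputable def conjClassCountMatrix (f : ι → Subgroup G) : Matrix (ConjClasses G) ι ℚ :=
  Matrix.of fun c i => ((f i).conjClassCount c : ℚ)

theorem rank_doubleCosetsMatrix_eq_rank_conjClassCountMatrix [Fintype ι] (f : ι → Subgroup G) :
    (Matrix.of fun i j : ι => (Nat.card (DoubleCosets (f i) (f j)) : ℚ)).rank
      = (conjClassCountMatrix f).rank := by
  set d : ι → ℚ := fun i => Nat.card (f i)
  set D : ConjClasses G → ℚ := fun c => c.centralizerCard
  set V := conjClassCountMatrix f
  have hfactor : diagonal d * (Matrix.of fun i j : ι => (Nat.card (DoubleCosets (f i) (f j)) : ℚ))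
      * diagonal d = Vᵀ * diagonal D * V := by
    ext i j
    have h := DoubleCosets.card_mul_card_mul_card_eq_sum_conjClassCount (f i) (f j)
    rw [mul_diagonal, diagonal_mul, mul_apply]
    simp only [mul_diagonal, of_apply, transpose_apply, conjClassCountMatrix, d, D, V]
    norm_cast
    calc _ = Nat.card (DoubleCosets (f i) (f j)) * (Nat.card (f i) * Nat.card (f j)) := by ring
      _ = _ := h
      _ = _ := sum_congr rfl fun c _ => by ring
  have hd : IsUnit (diagonal d).det := by
    rw [← isUnit_iff_isUnit_det, isUnit_diagonal, Pi.isUnit_iff]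
    exact fun i => isUnit_iff_ne_zero.2 (Nat.cast_ne_zero.2 Nat.card_pos.ne')
  rw [← rank_mul_eq_left_of_isUnit_det _ _ hd, ← rank_mul_eq_right_of_isUnit_det _ _ hd,
    ← Matrix.mul_assoc, hfactor,
    rank_transpose_mul_diagonal_mul_self V fun c => Nat.cast_pos.2 c.centralizerCard_pos]

theorem range_col_conjClassCountMatrix {H : Subgroup G} {f : ι → Subgroup G}
    (hle : ∀ i, f i ≤ H) (hrep : ∀ P ≤ H, ∃ i, ∃ g : G, P.map (MulAut.conj g).toMonoidHom = f i) :
    Set.range (conjClassCountMatrix f).col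
      = (fun (P : Subgroup G) c => (P.conjClassCount c : ℚ)) '' Set.Iic H := by
  ext v
  constructor
  · rintro ⟨i, rfl⟩
    exact ⟨f i, hle i, rfl⟩
  · rintro ⟨P, hP, rfl⟩
    obtain ⟨i, g, hg⟩ := hrep P hP
    refine ⟨i, ?_⟩
    show (fun c => ((f i).conjClassCount c : ℚ)) = _
    rw [← hg, Subgroup.conjClassCount_map_conj]

end Rank

section CyclicClasses

variable {G : Type*} [Group G] [Fintype G]

abbrev CyclicSubgroupClasses (H : Subgroup G) : Type _ :=
  Quot fun P Q : {P : Subgroup G // P ≤ H ∧ IsCyclic ↥P} =>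
    ∃ g : G, Subgroup.map (MulAut.conj g).toMonoidHom (P : Subgroup G) = (Q : Subgroup G)

namespace CyclicSubgroupClasses

open Subgroup

variable {H : Subgroup G}

noncomputable def generatorVector : CyclicSubgroupClasses H → ConjClasses G → ℚ :=
  Quot.lift (fun C c => ((C : Subgroup G).generatorConjClassCount c : ℚ)) fun _ _ ⟨g, hg⟩ => by
    rw [← hg, generatorConjClassCount_map_conj]

theorem generatorVector_mk (C : {C : Subgroup G // C ≤ H ∧ IsCyclic C}) (c : ConjClasses G) :
    generatorVector (H := H) (Quot.mk _ C) c = ((C : Subgroup G).generatorConjClassCount c : ℚ) :=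
  rfl

theorem linearIndependent_generatorVector : LinearIndependent ℚ (generatorVector (H := H)) := by
  refine linearIndependent_of_forall_exists_apply_ne_zero _ fun t => ?_
  induction t using Quot.ind with | _ C => ?_
  obtain ⟨x, hx⟩ := (C : Subgroup G).isCyclic_iff_exists_zpowers_eq_top.1 C.2.2
  have hxC := generatorConjClassCount_mk_ne_zero hx
  refine ⟨ConjClasses.mk x, by rw [generatorVector_mk]; exact_mod_cast hxC, fun t ht => ?_⟩
  induction t using Quot.ind with | _ C' => ?_
  by_contra h
  rw [generatorVector_mk, Nat.cast_eq_zero] at h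
  exact ht (Quot.sound (exists_map_conj_eq_of_generatorConjClassCount_ne_zero h hxC))

theorem finrank_span_range_generatorVector :
    finrank ℚ (span ℚ (Set.range (generatorVector (H := H))))
      = Nat.card (CyclicSubgroupClasses H) := by
  have := Fintype.ofFinite (CyclicSubgroupClasses H)
  rw [finrank_span_eq_card linearIndependent_generatorVector, Nat.card_eq_fintype_card]

theorem span_range_generatorVector : span ℚ (Set.range (generatorVector (H := H)))
    = span ℚ ((fun C c => (C.generatorConjClassCount c : ℚ)) '' Set.Iic H) := by
  apply le_antisymm <;> rw [span_le]
  · rintro _ ⟨t, rfl⟩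
    induction t using Quot.ind with | _ C => exact subset_span ⟨C, C.2.1, rfl⟩
  · rintro _ ⟨C, hC, rfl⟩
    by_cases hcyc : IsCyclic C
    · exact subset_span ⟨Quot.mk _ ⟨C, hC, hcyc⟩, rfl⟩
    · simp only [generatorConjClassCount_eq_zero hcyc, Pi.zero_apply, Nat.cast_zero]
      exact zero_mem _

theorem span_image_conjClassCount_eq_span_range_generatorVector :
    span ℚ ((fun (P : Subgroup G) c => (P.conjClassCount c : ℚ)) '' Set.Iic H)
      = span ℚ (Set.range (generatorVector (H := H))) := by
  have hsum : (fun (P : Subgroup G) c => (P.conjClassCount c : ℚ))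
      = fun P => ∑ C ∈ univ.filter (· ≤ P), fun c => (C.generatorConjClassCount c : ℚ) := by
    funext P c
    simp [Finset.sum_apply, conjClassCount_eq_sum_generatorConjClassCount]
  rw [hsum, span_image_sum_le_eq_span_image _ (isLowerSet_Iic H), span_range_generatorVector]

end CyclicSubgroupClasses

end CyclicClasses

theorem rank_doubleCoset_matrix_eq_card_cyclic_classes_general
    {G : Type*} [Group G] [Fintype G] (H : Subgroup G)
    {ι : Type} [Fintype ι] (f : ι → Subgroup G)
    (hle : ∀ i, f i ≤ H)
    (hrep : ∀ P : Subgroup G, P ≤ H →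
      ∃! i, ∃ g : G, Subgroup.map (MulAut.conj g).toMonoidHom P = f i) :
    (Matrix.of fun i j : ι => (Nat.card (DoubleCosets (f i) (f j)) : ℚ)).rank
      = Nat.card (Quot (fun P Q : {P : Subgroup G // P ≤ H ∧ IsCyclic ↥P} =>
          ∃ g : G, Subgroup.map (MulAut.conj g).toMonoidHom (P : Subgroup G)
            = (Q : Subgroup G))) := by
  rw [rank_doubleCosetsMatrix_eq_rank_conjClassCountMatrix, Matrix.rank_eq_finrank_span_cols,
    range_col_conjClassCountMatrix hle fun P hP => (hrep P hP).exists,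
    CyclicSubgroupClasses.span_image_conjClassCount_eq_span_range_generatorVector,
    CyclicSubgroupClasses.finrank_span_range_generatorVector]

/-- **Counting conjugacy classes of cyclic subgroups (Th\'evenaz).**
Let `G` be a finite group and `H ≤ G`.  Let `f i`, for `i` in a finite index type `ι`,
be a system of representatives of the `G`-conjugacy classes of subgroups of `H`.
Then the rank of the matrix `(|P\G/Q|)_{P,Q ≤_G H}` over `ℚ` equals the number of
`G`-conjugacy classes of cyclic subgroups of `H`. -/
theorem rank_doubleCoset_matrix_eq_card_cyclic_classes
    {G : Type*} [Group G] [Fintype G] (H : Subgroup G)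
    {ι : Type} [Fintype ι] [DecidableEq ι] (f : ι → Subgroup G)
    (hle : ∀ i, f i ≤ H)
    (hrep : ∀ P : Subgroup G, P ≤ H →
      ∃! i, ∃ g : G, Subgroup.map (MulAut.conj g).toMonoidHom P = f i) :
    (Matrix.of fun i j : ι => (Nat.card (DoubleCosets (f i) (f j)) : ℚ)).rank
      = Nat.card (Quot (fun P Q : {P : Subgroup G // P ≤ H ∧ IsCyclic ↥P} =>
          ∃ g : G, Subgroup.map (MulAut.conj g).toMonoidHom (P : Subgroup G)
            = (Q : Subgroup G))) :=
  rank_doubleCoset_matrix_eq_card_cyclic_classes_general H f hle hrep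
end

section
/- Let G be a finite group and S a subgroup of G. Let Ω be a finite (S,S)-biset, regarded as a left (S×S)-set via (s,t)·x = s·x·t⁻¹, such that every point stabilizer of Ω in S×S is of the form Δ(P, c_g) = {(u, g u g⁻¹) : u ∈ P} for some subgroup P ≤ S and some g ∈ G with g P g⁻¹ ≤ S. Then for all subgroups P, Q ≤ S: if the left S-set Ω/P of right P-orbits of Ω has a Q-fixed point, then Q is G-subconjugate to P, i.e., there exists g ∈ G with g Q g⁻¹ ≤ P. -/
/-- An `(S,S)`-biset structure on a type `Ω`: a left `S`-action and a right
`S`-action which commute with each other. -/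
structure Biset (S : Type*) [Group S] (Ω : Type*) where
  /-- the left action -/
  smul : S → Ω → Ω
  /-- the right action -/
  rmul : Ω → S → Ω
  one_smul : ∀ x, smul 1 x = x
  mul_smul : ∀ s t x, smul (s * t) x = smul s (smul t x)
  rmul_one : ∀ x, rmul x 1 = x
  rmul_mul : ∀ x s t, rmul x (s * t) = rmul (rmul x s) t
  smul_rmul : ∀ s x t, rmul (smul s x) t = smul s (rmul x t)

section Defs

variable {G : Type*} [Group G] {S : Subgroup G} {Ω : Type*}

/-- `Ω/P`: the set of right `P`-orbits of the biset `Ω`, for a subgroup `P ≤ S`. -/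
def Biset.rOrb (B : Biset (↥S) Ω) (P : Subgroup G) : Type _ :=
  Quot (fun x y : Ω => ∃ u : ↥S, (u : G) ∈ P ∧ B.rmul x u = y)

/-- The left `S`-action on `Ω/P`, given by `s · (xP) = (s·x)P`. -/
def Biset.rOrbSmul (B : Biset (↥S) Ω) (P : Subgroup G) (s : ↥S) :
    B.rOrb P → B.rOrb P :=
  Quot.map (B.smul s) (by
    rintro x y ⟨u, hu, rfl⟩
    exact ⟨u, hu, B.smul_rmul s x u⟩)

/-- The set of `Q`-fixed points of the left `S`-set `Ω/P`. -/
def Biset.fixedPts (B : Biset (↥S) Ω) (P Q : Subgroup G) : Type _ :=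
  {c : B.rOrb P // ∀ u : ↥S, (u : G) ∈ Q → B.rOrbSmul P u c = c}

/-- `P\Ω/Q`: the set of orbits of the action of `P × Q` on `Ω` given by
`(p, q) · x = p · x · q⁻¹`. -/
def Biset.dOrb (B : Biset (↥S) Ω) (P Q : Subgroup G) : Type _ :=
  Quot (fun x y : Ω => ∃ u v : ↥S, (u : G) ∈ P ∧ (v : G) ∈ Q ∧
    B.smul u (B.rmul x v⁻¹) = y)

/-- Condition (i): every point stabilizer of `Ω` in `S × S` (for the action
`(s,t) · x = s·x·t⁻¹`) is a "twisted diagonal" subgroup `Δ(P, c_g)` for some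
subgroup `P ≤ S` and some `g ∈ G` with `gPg⁻¹ ≤ S`.  This is the group-realized
form of the biset being `F`-generated. -/
def Biset.FusionGenerated (B : Biset (↥S) Ω) : Prop :=
  ∀ x : Ω, ∃ (P : Subgroup G) (g : G), P ≤ S ∧ (∀ u ∈ P, g * u * g⁻¹ ∈ S) ∧
    ∀ u v : ↥S, B.smul u (B.rmul x v⁻¹) = x ↔ ((u : G) ∈ P ∧ (v : G) = g * u * g⁻¹)

/-- Condition (ii), left half: for every subgroup `P ≤ S` and every `g ∈ G` with
`gPg⁻¹ ≤ S`, the left `P`-set obtained from `Ω` by restricting the left `S`-action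
along the inclusion `P ↪ S` is isomorphic to the one obtained by restricting along
`u ↦ gug⁻¹`.  This is the group-realized form of `F`-stability on the left. -/
def Biset.LeftStable (B : Biset (↥S) Ω) : Prop :=
  ∀ (P : Subgroup G) (g : G), P ≤ S → (∀ u ∈ P, g * u * g⁻¹ ∈ S) →
    ∃ e : Ω ≃ Ω, ∀ (u : G), u ∈ P → ∀ (huS : u ∈ S) (hgu : g * u * g⁻¹ ∈ S) (x : Ω),
      e (B.smul ⟨u, huS⟩ x) = B.smul ⟨g * u * g⁻¹, hgu⟩ (e x)

/-- Condition (ii), right half: `F`-stability of the right `S`-action. -/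
def Biset.RightStable (B : Biset (↥S) Ω) : Prop :=
  ∀ (P : Subgroup G) (g : G), P ≤ S → (∀ u ∈ P, g * u * g⁻¹ ∈ S) →
    ∃ e : Ω ≃ Ω, ∀ (u : G), u ∈ P → ∀ (huS : u ∈ S) (hgu : g * u * g⁻¹ ∈ S) (x : Ω),
      e (B.rmul x ⟨u, huS⟩) = B.rmul (e x) ⟨g * u * g⁻¹, hgu⟩

/-- Condition (iii): `Ω` contains a sub-`(S,S)`-biset isomorphic to `S` with left
and right actions given by multiplication. -/
def Biset.ContainsGroup (B : Biset (↥S) Ω) : Prop :=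
  ∃ f : ↥S → Ω, Function.Injective f ∧
    ∀ s x t : ↥S, f (s * x * t) = B.smul s (B.rmul (f x) t)

end Defs

/-! If the orbit `xP` is fixed by `Q`, then every `q ∈ Q` satisfies `q·x·v = x` for some
`v ∈ P`. The stabilizer of `x` is a twisted diagonal `Δ(R, c_g)` with `g` depending only on
`x`, so `g q g⁻¹ = v⁻¹ ∈ P`. -/

namespace Biset

variable {G : Type*} [Group G] {S : Subgroup G} {Ω : Type*}

theorem rOrb_rel_equivalence (B : Biset (↥S) Ω) (P : Subgroup G) :
    Equivalence (fun x y : Ω => ∃ u : ↥S, (u : G) ∈ P ∧ B.rmul x u = y) where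
  refl x := ⟨1, P.one_mem, B.rmul_one x⟩
  symm := by
    rintro x _ ⟨u, hu, rfl⟩
    exact ⟨u⁻¹, P.inv_mem hu, by rw [← B.rmul_mul, mul_inv_cancel, B.rmul_one]⟩
  trans := by
    rintro x _ _ ⟨u, hu, rfl⟩ ⟨v, hv, rfl⟩
    exact ⟨u * v, P.mul_mem hu hv, B.rmul_mul x u v⟩

theorem rOrb_mk_eq_mk_iff (B : Biset (↥S) Ω) (P : Subgroup G) {x y : Ω} :
    (Quot.mk _ x : B.rOrb P) = Quot.mk _ y ↔ ∃ u : ↥S, (u : G) ∈ P ∧ B.rmul x u = y :=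
  (B.rOrb_rel_equivalence P).quot_mk_eq_iff x y

theorem FusionGenerated.exists_conj_eq_inv_of_smul_rmul_eq {B : Biset (↥S) Ω}
    (hgen : B.FusionGenerated) (x : Ω) :
    ∃ g : G, ∀ s v : ↥S, B.rmul (B.smul s x) v = x → g * s * g⁻¹ = (v : G)⁻¹ := by
  obtain ⟨R, g, -, -, hstab⟩ := hgen x
  refine ⟨g, fun s v hsv => ?_⟩
  have hstabilizes : B.smul s (B.rmul x v⁻¹⁻¹) = x := by rw [inv_inv, ← B.smul_rmul, hsv]
  exact ((hstab s v⁻¹).mp hstabilizes).2.symm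

end Biset

theorem subconjugate_of_fixedPts_nonempty_general
    {G : Type*} [Group G] {S : Subgroup G} {Ω : Type*}
    (B : Biset (↥S) Ω) (hgen : B.FusionGenerated)
    (P Q : Subgroup G) (hQ : Q ≤ S)
    (hfix : Nonempty (B.fixedPts P Q)) :
    ∃ g : G, Subgroup.map (MulAut.conj g).toMonoidHom Q ≤ P := by
  obtain ⟨⟨c, hc⟩⟩ := hfix
  induction c using Quot.ind with
  | mk x =>
    obtain ⟨g, hg⟩ := hgen.exists_conj_eq_inv_of_smul_rmul_eq x
    refine ⟨g, ?_⟩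
    rintro _ ⟨q, hq, rfl⟩
    obtain ⟨v, hvP, hv⟩ := (B.rOrb_mk_eq_mk_iff P).mp (hc ⟨q, hQ hq⟩ hq)
    rw [MulEquiv.coe_toMonoidHom, MulAut.conj_apply, hg _ v hv]
    exact P.inv_mem hvP

/-- If the finite `(S,S)`-biset `Ω` is `F`-generated for the fusion on `S ≤ G`
induced by `G` (i.e., all point stabilizers in `S × S` are twisted diagonal
subgroups `Δ(P, c_g)`), then for all subgroups `P, Q ≤ S`: if the left `S`-set `Ω/P`
of right `P`-orbits has a `Q`-fixed point, then `Q` is `G`-subconjugate to `P`. -/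
theorem subconjugate_of_fixedPts_nonempty
    {G : Type*} [Group G] [Fintype G] {S : Subgroup G} {Ω : Type*} [Finite Ω]
    (B : Biset (↥S) Ω) (hgen : B.FusionGenerated)
    (P Q : Subgroup G) (hP : P ≤ S) (hQ : Q ≤ S)
    (hfix : Nonempty (B.fixedPts P Q)) :
    ∃ g : G, Subgroup.map (MulAut.conj g).toMonoidHom Q ≤ P :=
  subconjugate_of_fixedPts_nonempty_general B hgen P Q hQ hfix
end
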